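/- Let n ≥ 1 and let A be an n×n nonnegative real matrix. Then max_{1≤k≤n} ( max_i (A^{⊗k})_{ii} )^{1/k} = λ(A), i.e., the trace-based expression tr(A) ⊕ tr^{1/2}(A^{⊗2}) ⊕ ⋯ ⊕ tr^{1/n}(A^{⊗n}) for the max-times spectral radius coincides with the maximum geometric cycle mean max_{1≤k≤n} max_{i_1,…,i_k} (A_{i_1 i_2} A_{i_2 i_3} ⋯ A_{i_k i_1})^{1/k}. -/

import Mathlib

/-!
Entry `(i, j)` of `A^{⊗k}` is the largest weight of a walk of length `k` from `i` to `j`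
(a maximising intermediate vertex is chosen step by step). Hence `tr(A^{⊗k})` is the largest
weight of a closed walk of length `k`, and a closed walk of length `k` is the same as a map
`Fin k → Fin n` read cyclically. Taking `k`-th roots and maximising over `1 ≤ k ≤ n` gives
`λ(A)` on both sides.
-/

open scoped BigOperators

noncomputable section

/-- The max-times spectral radius (maximum geometric cycle mean) of a
nonnegative `n × n` real matrix. -/
def mtSpecRad {n : ℕ} (A : Matrix (Fin n) (Fin n) ℝ) : ℝ :=
  sSup { r : ℝ | ∃ (k : ℕ) (hk : 0 < k), k ≤ n ∧ ∃ f : Fin k → Fin n,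
    r = (∏ t : Fin k, A (f t) (f ⟨((t : ℕ) + 1) % k, Nat.mod_lt _ hk⟩)) ^ ((k : ℝ)⁻¹) }

/-- The maximum cycle mean of a real `n × n` matrix (max-plus spectral radius). -/
def mpCycleMean {n : ℕ} (A : Matrix (Fin n) (Fin n) ℝ) : ℝ :=
  sSup { r : ℝ | ∃ (k : ℕ) (hk : 0 < k), k ≤ n ∧ ∃ f : Fin k → Fin n,
    r = (∑ t : Fin k, A (f t) (f ⟨((t : ℕ) + 1) % k, Nat.mod_lt _ hk⟩)) / (k : ℝ) }

/-- Max-times matrix product. -/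
def mtMul {n : ℕ} (A B : Matrix (Fin n) (Fin n) ℝ) : Matrix (Fin n) (Fin n) ℝ :=
  Matrix.of fun i j => ⨆ k : Fin n, A i k * B k j

/-- Max-times matrix powers, with `A^{⊗0} = I`. -/
def mtPow {n : ℕ} (A : Matrix (Fin n) (Fin n) ℝ) : ℕ → Matrix (Fin n) (Fin n) ℝ
  | 0 => Matrix.of fun i j => if i = j then 1 else 0
  | (k + 1) => mtMul (mtPow A k) A

/-- Max-times Kleene star: entrywise maximum of `I, S, S^{⊗2}, …, S^{⊗(n-1)}`. -/
def mtStar {n : ℕ} (S : Matrix (Fin n) (Fin n) ℝ) : Matrix (Fin n) (Fin n) ℝ :=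
  Matrix.of fun i j => ⨆ k : Fin n, mtPow S (k : ℕ) i j

/-- Max-times matrix-vector product. -/
def mtVecMul {n : ℕ} (S : Matrix (Fin n) (Fin n) ℝ) (u : Fin n → ℝ) : Fin n → ℝ :=
  fun i => ⨆ j, S i j * u j

/-- Max-plus matrix product. -/
def mpMul {n : ℕ} (A B : Matrix (Fin n) (Fin n) ℝ) : Matrix (Fin n) (Fin n) ℝ :=
  Matrix.of fun i j => ⨆ k : Fin n, (A i k + B k j)

/-- `mpPow A k` is the max-plus power `A^{⊗(k+1)}`. -/
def mpPow {n : ℕ} (A : Matrix (Fin n) (Fin n) ℝ) : ℕ → Matrix (Fin n) (Fin n) ℝ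
  | 0 => A
  | (k + 1) => mpMul (mpPow A k) A

/-- Max-plus Kleene star: `S^*_{ii} = max(0, max_{1≤k≤n-1} (S^{⊗k})_{ii})` and
`S^*_{ij} = max_{1≤k≤n-1} (S^{⊗k})_{ij}` for `i ≠ j`. -/
def mpStar {n : ℕ} (S : Matrix (Fin n) (Fin n) ℝ) : Matrix (Fin n) (Fin n) ℝ :=
  Matrix.of fun i j =>
    if i = j then max 0 (⨆ k : Fin (n - 1), mpPow S (k : ℕ) i j)
    else ⨆ k : Fin (n - 1), mpPow S (k : ℕ) i j

/-- Max-plus matrix-vector product. -/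
def mpVecMul {n : ℕ} (S : Matrix (Fin n) (Fin n) ℝ) (x : Fin n → ℝ) : Fin n → ℝ :=
  fun i => ⨆ j, (S i j + x j)

/-- Chebyshev-like (max-times) distance between a nonnegative matrix `A` and the
rank-one reciprocal matrix with entries `x i / x j`. -/
def mtRho {n : ℕ} (A : Matrix (Fin n) (Fin n) ℝ) (x : Fin n → ℝ) : ℝ :=
  max (⨆ p : Fin n × Fin n, A p.1 p.2 * x p.2 / x p.1)
    (sSup { r : ℝ | ∃ i j, 0 < A i j ∧ r = x i / (A i j * x j) })

/-- The alternating max-times product `A ⊗ C^{⊗ i₁} ⊗ A ⊗ C^{⊗ i₂} ⊗ ⋯ ⊗ A ⊗ C^{⊗ i_k}`. -/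
def mtChain {n : ℕ} (A C : Matrix (Fin n) (Fin n) ℝ) :
    (k : ℕ) → (Fin k → ℕ) → Matrix (Fin n) (Fin n) ℝ
  | 0, _ => Matrix.of fun i j => if i = j then 1 else 0
  | (k + 1), f => mtMul (mtMul A (mtPow C (f 0))) (mtChain A C k (fun t => f t.succ))

/-- The optimal value `θ` of the constrained max-times approximation problem. -/
def mtTheta {n : ℕ} (A C : Matrix (Fin n) (Fin n) ℝ) : ℝ :=
  max (mtSpecRad A)
    (sSup { r : ℝ | ∃ k : ℕ, 0 < k ∧ k ≤ n - 1 ∧ ∃ f : Fin k → ℕ,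
      1 ≤ ∑ t, f t ∧ (∑ t, f t) ≤ n - k ∧
      r = (⨆ i, mtChain A C k f i i) ^ ((k : ℝ)⁻¹) })

theorem Fin.snoc_self_zero_succ {α : Type*} {m : ℕ} (f : Fin (m + 1) → α) (t : Fin (m + 1)) :
    (Fin.snoc f (f 0) : Fin (m + 2) → α) t.succ =
      f ⟨((t : ℕ) + 1) % (m + 1), Nat.mod_lt _ m.succ_pos⟩ := by
  induction t using Fin.lastCases with
  | last => simp
  | cast s =>
    rw [Fin.succ_castSucc, Fin.snoc_castSucc]
    congr 1
    ext
    simp [Nat.mod_eq_of_lt (Nat.succ_lt_succ s.isLt)]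

section Walks

variable {ι R : Type*} [CommMonoid R] (A : Matrix ι ι R)

def walkWeight {k : ℕ} (g : Fin (k + 1) → ι) : R :=
  ∏ t : Fin k, A (g t.castSucc) (g t.succ)

def cycleWeight {m : ℕ} (f : Fin (m + 1) → ι) : R :=
  ∏ t : Fin (m + 1), A (f t) (f ⟨((t : ℕ) + 1) % (m + 1), Nat.mod_lt _ m.succ_pos⟩)

variable {A}

theorem walkWeight_eq_init_mul {k : ℕ} (g : Fin (k + 2) → ι) :
    walkWeight A g =
      walkWeight A (Fin.init g) * A (g (Fin.last k).castSucc) (g (Fin.last (k + 1))) := by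
  simp only [walkWeight, Fin.prod_univ_castSucc, Fin.init, Fin.succ_castSucc, Fin.succ_last]

theorem walkWeight_snoc_zero {m : ℕ} (f : Fin (m + 1) → ι) :
    walkWeight A (Fin.snoc f (f 0) : Fin (m + 2) → ι) = cycleWeight A f := by
  simp only [walkWeight, cycleWeight, Fin.snoc_castSucc, Fin.snoc_self_zero_succ]

end Walks

section MaxTimesPowers

variable {n : ℕ} {A : Matrix (Fin n) (Fin n) ℝ}

theorem mtPow_nonneg (hA : ∀ i j, 0 ≤ A i j) (k : ℕ) (i j : Fin n) : 0 ≤ mtPow A k i j := by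
  induction k generalizing j with
  | zero => simp only [mtPow, Matrix.of_apply]; positivity
  | succ k ih => exact Real.iSup_nonneg fun m => mul_nonneg (ih m) (hA m j)

theorem mtPow_one (hA : ∀ i j, 0 ≤ A i j) : mtPow A 1 = A := by
  ext i j
  simp only [mtPow, mtMul, Matrix.of_apply]
  refine le_antisymm (Real.iSup_le (fun m => ?_) (hA i j)) ?_
  · by_cases h : i = m
    · simp [h]
    · simpa [h] using hA i j
  · exact le_ciSup_of_le (Finite.bddAbove_range _) i (by simp)

theorem walkWeight_le_mtPow (hA : ∀ i j, 0 ≤ A i j) {k : ℕ} (g : Fin (k + 1) → Fin n) :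
    walkWeight A g ≤ mtPow A k (g 0) (g (Fin.last k)) := by
  induction k with
  | zero => simp [walkWeight, mtPow]
  | succ k ih =>
    rw [walkWeight_eq_init_mul]
    set j := g (Fin.last k).castSucc
    calc _ ≤ mtPow A k (g 0) j * A j (g (Fin.last (k + 1))) :=
          mul_le_mul_of_nonneg_right (ih (Fin.init g)) (hA _ _)
      _ ≤ mtPow A (k + 1) (g 0) (g (Fin.last (k + 1))) :=
          le_ciSup (Finite.bddAbove_range (fun m => mtPow A k (g 0) m * A m _)) _

theorem exists_walk_mtPow_le_walkWeight (hA : ∀ i j, 0 ≤ A i j) (k : ℕ) (i j : Fin n) :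
    ∃ g : Fin (k + 2) → Fin n, g 0 = i ∧ g (Fin.last (k + 1)) = j ∧
      mtPow A (k + 1) i j ≤ walkWeight A g := by
  induction k generalizing j with
  | zero => exact ⟨![i, j], rfl, rfl, by simp [mtPow_one hA, walkWeight]⟩
  | succ k ih =>
    have : Nonempty (Fin n) := ⟨i⟩
    obtain ⟨m, hm⟩ := exists_eq_ciSup_of_finite (f := fun m => mtPow A (k + 1) i m * A m j)
    obtain ⟨g, hg0, hgl, hle⟩ := ih m
    refine ⟨Fin.snoc g j, (Fin.snoc_castSucc (i := 0) ..).trans hg0, Fin.snoc_last _ _, ?_⟩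
    calc mtPow A (k + 2) i j = mtPow A (k + 1) i m * A m j := hm.symm
      _ ≤ walkWeight A g * A m j := mul_le_mul_of_nonneg_right hle (hA m j)
      _ = _ := by simp [walkWeight_eq_init_mul (Fin.snoc g j), hgl]

theorem cycleWeight_le_iSup_mtPow_diag (hA : ∀ i j, 0 ≤ A i j) {m : ℕ}
    (f : Fin (m + 1) → Fin n) :
    cycleWeight A f ≤ ⨆ i, mtPow A (m + 1) i i :=
  calc cycleWeight A f = walkWeight A (Fin.snoc f (f 0) : Fin (m + 2) → Fin n) :=
        (walkWeight_snoc_zero f).symm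
    _ ≤ mtPow A (m + 1) (f 0) (f 0) := by
        simpa using walkWeight_le_mtPow hA (Fin.snoc f (f 0) : Fin (m + 2) → Fin n)
    _ ≤ ⨆ i, mtPow A (m + 1) i i :=
        le_ciSup (Finite.bddAbove_range fun i => mtPow A (m + 1) i i) _

theorem exists_iSup_mtPow_diag_le_cycleWeight [Nonempty (Fin n)] (hA : ∀ i j, 0 ≤ A i j)
    (m : ℕ) :
    ∃ f : Fin (m + 1) → Fin n, ⨆ i, mtPow A (m + 1) i i ≤ cycleWeight A f := by
  obtain ⟨i, hi⟩ := exists_eq_ciSup_of_finite (f := fun i => mtPow A (m + 1) i i)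
  obtain ⟨g, hg0, hgl, hle⟩ := exists_walk_mtPow_le_walkWeight hA m i i
  refine ⟨Fin.init g, ?_⟩
  have hclosed : Fin.init g 0 = g (Fin.last (m + 1)) := hg0.trans hgl.symm
  rwa [← walkWeight_snoc_zero, hclosed, Fin.snoc_init_self, ← hi]

end MaxTimesPowers

theorem mt_specRad_trace_general {n : ℕ} (A : Matrix (Fin n) (Fin n) ℝ)
    (hA : ∀ i j, 0 ≤ A i j) :
    (⨆ k : Fin n, (⨆ i, mtPow A ((k : ℕ) + 1) i i) ^ ((((k : ℕ) + 1 : ℕ) : ℝ)⁻¹)) =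
      mtSpecRad A := by
  set T : Fin n → ℝ :=
    fun k => (⨆ i, mtPow A ((k : ℕ) + 1) i i) ^ ((((k : ℕ) + 1 : ℕ) : ℝ)⁻¹)
  set S := { r : ℝ | ∃ (k : ℕ) (hk : 0 < k), k ≤ n ∧ ∃ f : Fin k → Fin n,
    r = (∏ t : Fin k, A (f t) (f ⟨((t : ℕ) + 1) % k, Nat.mod_lt _ hk⟩)) ^ ((k : ℝ)⁻¹) }
  have trace_nonneg (k : ℕ) : 0 ≤ ⨆ i, mtPow A k i i :=
    Real.iSup_nonneg fun i => mtPow_nonneg hA k i i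
  have mem_le : ∀ r ∈ S, r ≤ ⨆ k, T k := by
    rintro r ⟨_ | m, hk, hkn, f, rfl⟩
    · exact absurd hk (lt_irrefl 0)
    calc cycleWeight A f ^ (((m + 1 : ℕ) : ℝ)⁻¹)
        ≤ (⨆ i, mtPow A (m + 1) i i) ^ (((m + 1 : ℕ) : ℝ)⁻¹) :=
          Real.rpow_le_rpow (Finset.prod_nonneg fun _ _ => hA _ _)
            (cycleWeight_le_iSup_mtPow_diag hA f) (by positivity)
      _ ≤ ⨆ k, T k := le_ciSup (Finite.bddAbove_range T) ⟨m, hkn⟩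
  apply le_antisymm
  · refine Real.iSup_le (fun k => ?_) (Real.sSup_nonneg ?_)
    · have : Nonempty (Fin n) := ⟨k⟩
      obtain ⟨f, hf⟩ := exists_iSup_mtPow_diag_le_cycleWeight hA k
      calc T k ≤ cycleWeight A f ^ ((((k : ℕ) + 1 : ℕ) : ℝ)⁻¹) :=
            Real.rpow_le_rpow (trace_nonneg _) hf (by positivity)
        _ ≤ sSup S := le_csSup ⟨_, mem_le⟩ ⟨k + 1, k.succ_pos, k.isLt, f, rfl⟩
    · rintro r ⟨k, hk, -, f, rfl⟩
      exact Real.rpow_nonneg (Finset.prod_nonneg fun _ _ => hA _ _) _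
  · exact Real.sSup_le mem_le (Real.iSup_nonneg fun k => Real.rpow_nonneg (trace_nonneg _) _)

/-- The trace-based expression
`tr(A) ⊕ tr^{1/2}(A^{⊗2}) ⊕ ⋯ ⊕ tr^{1/n}(A^{⊗n})` equals the max-times spectral
radius (maximum geometric cycle mean) of a nonnegative matrix `A`. -/
theorem mt_specRad_trace {n : ℕ} (hn : 1 ≤ n) (A : Matrix (Fin n) (Fin n) ℝ)
    (hA : ∀ i j, 0 ≤ A i j) :
    (⨆ k : Fin n, (⨆ i, mtPow A ((k : ℕ) + 1) i i) ^ ((((k : ℕ) + 1 : ℕ) : ℝ)⁻¹)) =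
      mtSpecRad A :=
  mt_specRad_trace_general A hA

end
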